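/- arXiv:1610.01845 — 2 statements merged into one kernel-verified Lean document; each statement's English description precedes it below -/
import Mathlib

section
/- Fix p > 0 and let I ⊆ ℝ be an open interval. If ȳ : I → ℝ is a differentiable function such that for every μ ∈ I one has ∂E/∂y(ȳ(μ),p,μ) = 0 and ∂²E/∂y²(ȳ(μ),p,μ) < 0, then ȳ'(μ) > 0 for every μ ∈ I; moreover ȳ'(μ) = −(∂/∂μ ∂E/∂y)(ȳ(μ),p,μ) / ∂²E/∂y²(ȳ(μ),p,μ). -/
/-- The single-cell partition function `K(y,p,μ)` with cell volume `υ` and ratio `a`. -/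
noncomputable def K (υ a y p μ : ℝ) : ℝ :=
  ∑' n : ℕ, (υ ^ n / (Nat.factorial n : ℝ)) *
    Real.exp ((y + μ) * n - (a * p / 2) * (n : ℝ) ^ 2)

/-- The function `E(y,p,μ) = -y²/(2p) + ln K(y,p,μ)`. -/
noncomputable def E (υ a y p μ : ℝ) : ℝ :=
  -(y ^ 2) / (2 * p) + Real.log (K υ a y p μ)


/-!
With `β = a p / 2`, `K(y,p,μ) = Z₀(y + μ)` where `Zₖ(x) = ∑ nᵏ υⁿ/n! · exp(x n − β n²)`, and
`Zₖ' = Zₖ₊₁`. Hence `∂E/∂y = −y/p + m(y + μ)` with `m = Z₁/Z₀` the mean occupation, and both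
`∂²E/∂y²` and `∂/∂μ ∂E/∂y` are governed by the occupation variance `v = m'`, which is positive by
Cauchy–Schwarz: `∂²E/∂y² = −1/p + v` and `∂/∂μ ∂E/∂y = v`. Differentiating the critical-point
identity `−ȳ/p + m(ȳ + μ) = 0` gives `−ȳ'/p + v · (ȳ' + 1) = 0`, i.e. `ȳ' = −v / (−1/p + v)`,
which is positive because `v > 0` and `−1/p + v < 0`.
-/

open Real

noncomputable def occupationTerm (υ β : ℝ) (k : ℕ) (x : ℝ) (n : ℕ) : ℝ :=
  (n : ℝ) ^ k * (υ ^ n / n.factorial) * exp (x * n - β * (n : ℝ) ^ 2)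

noncomputable def occupationMoment (υ β : ℝ) (k : ℕ) (x : ℝ) : ℝ :=
  ∑' n, occupationTerm υ β k x n

noncomputable def meanOccupation (υ β x : ℝ) : ℝ :=
  occupationMoment υ β 1 x / occupationMoment υ β 0 x

noncomputable def occupationVariance (υ β x : ℝ) : ℝ :=
  occupationMoment υ β 2 x / occupationMoment υ β 0 x - meanOccupation υ β x ^ 2

section Moments

variable {υ β : ℝ}

lemma occupationTerm_nonneg (hυ : 0 ≤ υ) (k : ℕ) (x : ℝ) (n : ℕ) :
    0 ≤ occupationTerm υ β k x n := by
  unfold occupationTerm; positivity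

lemma occupationTerm_zero_pos (hυ : 0 < υ) (x : ℝ) (n : ℕ) : 0 < occupationTerm υ β 0 x n := by
  unfold occupationTerm; positivity

lemma occupationTerm_le_of_le (hυ : 0 ≤ υ) (k : ℕ) {x x' : ℝ} (hx : x ≤ x') (n : ℕ) :
    occupationTerm υ β k x n ≤ occupationTerm υ β k x' n := by
  unfold occupationTerm
  gcongr

-- `nᵏ ≤ e^{kn}` and `exp(−βn²) ≤ 1` reduce the series to that of `exp`.
lemma occupationTerm_le_exp_series (hυ : 0 ≤ υ) (hβ : 0 ≤ β) (k : ℕ) (x : ℝ) (n : ℕ) :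
    occupationTerm υ β k x n ≤ (υ * exp (x + k)) ^ n / n.factorial := by
  have hpow : (n : ℝ) ^ k ≤ exp (k * n) := by
    rw [exp_nat_mul]
    gcongr
    linarith [add_one_le_exp (n : ℝ)]
  have hexp : exp (x * n - β * (n : ℝ) ^ 2) ≤ exp (x * n) := by
    gcongr; nlinarith [sq_nonneg (n : ℝ)]
  calc occupationTerm υ β k x n
      ≤ exp (k * n) * (υ ^ n / n.factorial) * exp (x * n) := by
        unfold occupationTerm; gcongr
    _ = (υ * exp (x + k)) ^ n / n.factorial := by
        rw [mul_pow, ← exp_nat_mul, mul_div_right_comm, mul_comm (exp _), mul_assoc, ← exp_add]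
        ring_nf

lemma summable_occupationTerm (hυ : 0 ≤ υ) (hβ : 0 ≤ β) (k : ℕ) (x : ℝ) :
    Summable (occupationTerm υ β k x) :=
  (summable_pow_div_factorial _).of_nonneg_of_le (occupationTerm_nonneg hυ k x)
    (occupationTerm_le_exp_series hυ hβ k x)

lemma occupationMoment_zero_pos (hυ : 0 ≤ υ) (hβ : 0 ≤ β) (x : ℝ) :
    0 < occupationMoment υ β 0 x :=
  (summable_occupationTerm hυ hβ 0 x).tsum_pos (occupationTerm_nonneg hυ 0 x) 0
    (by simp [occupationTerm])

lemma hasDerivAt_occupationTerm (k : ℕ) (n : ℕ) (x : ℝ) :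
    HasDerivAt (fun x => occupationTerm υ β k x n) (occupationTerm υ β (k + 1) x n) x := by
  have hlin : HasDerivAt (fun x : ℝ => x * n - β * (n : ℝ) ^ 2) n x := by
    simpa using ((hasDerivAt_id x).mul_const (n : ℝ)).sub_const (β * (n : ℝ) ^ 2)
  refine (hlin.exp.const_mul ((n : ℝ) ^ k * (υ ^ n / n.factorial))).congr_deriv ?_
  unfold occupationTerm; ring

-- Termwise differentiation on `(-R, R)`, `R = |x| + 1`, dominated by the series at `R`.
lemma hasDerivAt_occupationMoment (hυ : 0 ≤ υ) (hβ : 0 ≤ β) (k : ℕ) (x : ℝ) :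
    HasDerivAt (occupationMoment υ β k) (occupationMoment υ β (k + 1) x) x := by
  set R := |x| + 1
  have hx : x ∈ Set.Ioo (-R) R := by
    constructor <;> linarith [neg_abs_le x, le_abs_self x]
  refine hasDerivAt_tsum_of_isPreconnected (summable_occupationTerm hυ hβ (k + 1) R)
    isOpen_Ioo isPreconnected_Ioo (fun n y _ => hasDerivAt_occupationTerm k n y)
    (fun n y hy => ?_) hx (summable_occupationTerm hυ hβ k x) hx
  rw [norm_of_nonneg (occupationTerm_nonneg hυ _ y n)]
  exact occupationTerm_le_of_le hυ _ hy.2.le n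

-- `∑ₙ wₙ (n Z₀ − Z₁)² = Z₀ (Z₀ Z₂ − Z₁²)` with all `wₙ > 0`.
lemma sq_occupationMoment_one_lt (hυ : 0 < υ) (hβ : 0 ≤ β) (x : ℝ) :
    occupationMoment υ β 1 x ^ 2 < occupationMoment υ β 0 x * occupationMoment υ β 2 x := by
  set A := occupationMoment υ β 0 x
  set B := occupationMoment υ β 1 x
  set C := occupationMoment υ β 2 x
  set w := occupationTerm υ β 0 x
  have hs (k : ℕ) : Summable (occupationTerm υ β k x) := summable_occupationTerm hυ.le hβ k x
  have hexpand : (fun n : ℕ => w n * ((n : ℝ) * A - B) ^ 2) = fun n =>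
      A ^ 2 * occupationTerm υ β 2 x n - 2 * A * B * occupationTerm υ β 1 x n + B ^ 2 * w n := by
    ext n; simp only [w, occupationTerm]; ring
  have hsum : Summable fun n : ℕ => w n * ((n : ℝ) * A - B) ^ 2 := by
    rw [hexpand]
    exact (((hs 2).mul_left _).sub ((hs 1).mul_left _)).add ((hs 0).mul_left _)
  have hvalue : ∑' n : ℕ, w n * ((n : ℝ) * A - B) ^ 2 = A * (A * C - B ^ 2) := by
    rw [hexpand, ((hs 2).mul_left _ |>.sub ((hs 1).mul_left _)).tsum_add ((hs 0).mul_left _),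
      ((hs 2).mul_left _).tsum_sub ((hs 1).mul_left _), tsum_mul_left, tsum_mul_left, tsum_mul_left]
    simp only [A, B, C, occupationMoment]
    ring
  have hw (n : ℕ) : 0 < w n := occupationTerm_zero_pos hυ x n
  -- the terms at `n = 0` and `n = 1` cannot both vanish
  have hpos : 0 < ∑' n : ℕ, w n * ((n : ℝ) * A - B) ^ 2 := by
    have hnonneg (n : ℕ) : 0 ≤ w n * ((n : ℝ) * A - B) ^ 2 := mul_nonneg (hw n).le (sq_nonneg _)
    rcases eq_or_ne B 0 with hB | hB
    · refine hsum.tsum_pos hnonneg 1 ?_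
      simpa [hB] using mul_pos (hw 1) (pow_pos (occupationMoment_zero_pos hυ.le hβ x) 2)
    · refine hsum.tsum_pos hnonneg 0 ?_
      simpa using mul_pos (hw 0) (pow_two_pos_of_ne_zero hB)
  have hA : 0 < A := occupationMoment_zero_pos hυ.le hβ x
  rw [hvalue] at hpos
  nlinarith [pos_of_mul_pos_right hpos hA.le]

lemma occupationVariance_pos (hυ : 0 < υ) (hβ : 0 ≤ β) (x : ℝ) :
    0 < occupationVariance υ β x := by
  have hA := occupationMoment_zero_pos hυ.le hβ x
  have hcs := sq_occupationMoment_one_lt hυ hβ x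
  rw [occupationVariance, meanOccupation, sub_pos, div_pow, div_lt_div_iff₀ (by positivity) hA]
  nlinarith

lemma hasDerivAt_meanOccupation (hυ : 0 ≤ υ) (hβ : 0 ≤ β) (x : ℝ) :
    HasDerivAt (meanOccupation υ β) (occupationVariance υ β x) x := by
  have hA := occupationMoment_zero_pos hυ hβ x
  refine ((hasDerivAt_occupationMoment hυ hβ 1 x).div
    (hasDerivAt_occupationMoment hυ hβ 0 x) hA.ne').congr_deriv ?_
  rw [occupationVariance, meanOccupation]
  field_simp

end Moments

section Energy

variable {υ a p : ℝ}

lemma K_eq_occupationMoment (y μ : ℝ) :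
    K υ a y p μ = occupationMoment υ (a * p / 2) 0 (y + μ) := by
  simp [K, occupationMoment, occupationTerm]

lemma hasDerivAt_E (hυ : 0 ≤ υ) (hap : 0 ≤ a * p) (y μ : ℝ) :
    HasDerivAt (fun y => E υ a y p μ) (-(y / p) + meanOccupation υ (a * p / 2) (y + μ)) y := by
  have hβ : 0 ≤ a * p / 2 := by positivity
  have hquad : HasDerivAt (fun y : ℝ => -y ^ 2 / (2 * p)) (-(y / p)) y := by
    refine ((hasDerivAt_pow 2 y).neg.div_const (2 * p)).congr_deriv ?_
    field_simp
    ring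
  have hZ : HasDerivAt (fun y => occupationMoment υ (a * p / 2) 0 (y + μ))
      (occupationMoment υ (a * p / 2) 1 (y + μ)) y := by
    simpa using (hasDerivAt_occupationMoment hυ hβ 0 (y + μ)).comp_add_const y μ
  simp only [E, K_eq_occupationMoment]
  exact hquad.add (hZ.log (occupationMoment_zero_pos hυ hβ _).ne')

lemma deriv_E (hυ : 0 ≤ υ) (hap : 0 ≤ a * p) (μ : ℝ) :
    deriv (fun y => E υ a y p μ) = fun y => -(y / p) + meanOccupation υ (a * p / 2) (y + μ) :=
  funext fun y => (hasDerivAt_E hυ hap y μ).deriv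

lemma hasDerivAt_deriv_E (hυ : 0 ≤ υ) (hap : 0 ≤ a * p) (y μ : ℝ) :
    HasDerivAt (deriv (fun y => E υ a y p μ))
      (-(1 / p) + occupationVariance υ (a * p / 2) (y + μ)) y := by
  rw [deriv_E hυ hap]
  exact ((hasDerivAt_id y).div_const p).neg.add
    ((hasDerivAt_meanOccupation hυ (by positivity) (y + μ)).comp_add_const y μ)

lemma hasDerivAt_deriv_E_param (hυ : 0 ≤ υ) (hap : 0 ≤ a * p) (y μ : ℝ) :
    HasDerivAt (fun μ' => deriv (fun y => E υ a y p μ') y)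
      (occupationVariance υ (a * p / 2) (y + μ)) μ := by
  simp only [deriv_E hυ hap]
  exact ((hasDerivAt_meanOccupation hυ (by positivity) (y + μ)).comp_const_add y μ).const_add _

lemma hasDerivAt_deriv_E_comp (hυ : 0 ≤ υ) (hap : 0 ≤ a * p) {ybar : ℝ → ℝ} {y' μ : ℝ}
    (hy : HasDerivAt ybar y' μ) :
    HasDerivAt (fun μ' => deriv (fun y => E υ a y p μ') (ybar μ'))
      (-(y' / p) + occupationVariance υ (a * p / 2) (ybar μ + μ) * (y' + 1)) μ := by
  simp only [deriv_E hυ hap]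
  exact (hy.div_const p).neg.add
    ((hasDerivAt_meanOccupation hυ (by positivity) _).comp μ (hy.add (hasDerivAt_id μ)))

end Energy

theorem stmt_3 (υ a : ℝ) (hυ : 0 < υ) (ha : 1 < a) (p : ℝ) (hp : 0 < p)
    (c d : ℝ) (ybar : ℝ → ℝ)
    (hdiff : ∀ μ ∈ Set.Ioo c d, DifferentiableAt ℝ ybar μ)
    (hcrit : ∀ μ ∈ Set.Ioo c d, deriv (fun y => E υ a y p μ) (ybar μ) = 0)
    (hneg : ∀ μ ∈ Set.Ioo c d, deriv (deriv (fun y => E υ a y p μ)) (ybar μ) < 0) :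
    ∀ μ ∈ Set.Ioo c d, 0 < deriv ybar μ ∧
      deriv ybar μ =
        -(deriv (fun μ' => deriv (fun y => E υ a y p μ') (ybar μ)) μ) /
          deriv (deriv (fun y => E υ a y p μ)) (ybar μ) := by
  intro μ hμ
  have hap : 0 ≤ a * p := mul_nonneg (by linarith) hp.le
  set v := occupationVariance υ (a * p / 2) (ybar μ + μ)
  have hv : 0 < v := occupationVariance_pos hυ (by positivity) _
  have hsecond : deriv (deriv (fun y => E υ a y p μ)) (ybar μ) = -(1 / p) + v :=
    (hasDerivAt_deriv_E hυ.le hap (ybar μ) μ).deriv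
  have hmixed : deriv (fun μ' => deriv (fun y => E υ a y p μ') (ybar μ)) μ = v :=
    (hasDerivAt_deriv_E_param hυ.le hap (ybar μ) μ).deriv
  have hcurv : -(1 / p) + v < 0 := hsecond ▸ hneg μ hμ
  have himplicit : -(deriv ybar μ / p) + v * (deriv ybar μ + 1) = 0 := by
    refine (hasDerivAt_deriv_E_comp hυ.le hap (hdiff μ hμ).hasDerivAt).unique
      ((hasDerivAt_const μ 0).congr_of_eventuallyEq ?_)
    filter_upwards [isOpen_Ioo.mem_nhds hμ] with μ' hμ' using hcrit μ' hμ'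
  have hslope : deriv ybar μ = -v / (-(1 / p) + v) := by
    rw [eq_div_iff hcurv.ne]
    linear_combination himplicit
  rw [hsecond, hmixed, hslope]
  exact ⟨div_pos_of_neg_of_neg (by linarith) hcurv, rfl⟩
end

section
/- For all p > 0 and μ ∈ ℝ, the function y ↦ E(y,p,μ) tends to −∞ as |y| → ∞ and attains its global maximum: there exists ȳ ∈ ℝ such that E(y,p,μ) ≤ E(ȳ,p,μ) for all y ∈ ℝ. -/
/-!
Completing the square, `(y + μ) n - (a p / 2) n² ≤ (y + μ)² / (2 a p)`, so
`K ≤ exp ((y + μ)² / (2 a p) + υ)` and `E` lies below a quadratic in `y` with leading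
coefficient `(1 / a - 1) / (2 p) < 0`; hence `E → -∞` at infinity. The series for `K` is
dominated on every half-line `y ≤ R` by the exponential series of `υ e^(R + μ)`, so `K` is
continuous, and a continuous function tending to `-∞` at infinity attains its maximum.
-/

open Filter Real

noncomputable def Kterm (υ a p μ y : ℝ) (n : ℕ) : ℝ :=
  υ ^ n / (Nat.factorial n : ℝ) * exp ((y + μ) * n - (a * p / 2) * (n : ℝ) ^ 2)

section Kterm

variable {υ a p μ y : ℝ}

theorem K_eq_tsum_Kterm : K υ a y p μ = ∑' n, Kterm υ a p μ y n := rfl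

theorem Kterm_nonneg (hυ : 0 ≤ υ) (n : ℕ) : 0 ≤ Kterm υ a p μ y n := by
  unfold Kterm; positivity

theorem Kterm_le_pow_div_factorial_of_le {R : ℝ} (hυ : 0 ≤ υ) (hap : 0 ≤ a * p) (hyR : y ≤ R) (n : ℕ) :
    Kterm υ a p μ y n ≤ (υ * exp (R + μ)) ^ n / (Nat.factorial n : ℝ) := by
  have hexp : (y + μ) * n - (a * p / 2) * (n : ℝ) ^ 2 ≤ (R + μ) * n := by
    nlinarith [sq_nonneg (n : ℝ), mul_le_mul_of_nonneg_right hyR (Nat.cast_nonneg' n)]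
  calc Kterm υ a p μ y n ≤ υ ^ n / (Nat.factorial n : ℝ) * exp ((R + μ) * n) := by
        unfold Kterm; gcongr
    _ = (υ * exp (R + μ)) ^ n / (Nat.factorial n : ℝ) := by
        rw [mul_pow, ← exp_nat_mul]; ring_nf

theorem Kterm_le_exp_sq (hυ : 0 ≤ υ) (hap : 0 < a * p) (n : ℕ) :
    Kterm υ a p μ y n ≤ exp ((y + μ) ^ 2 / (2 * (a * p))) * (υ ^ n / (Nat.factorial n : ℝ)) := by
  have hexp : (y + μ) * n - (a * p / 2) * (n : ℝ) ^ 2 ≤ (y + μ) ^ 2 / (2 * (a * p)) := by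
    rw [le_div_iff₀ (by positivity)]
    nlinarith [sq_nonneg ((y + μ) - a * p * n)]
  rw [mul_comm]
  unfold Kterm; gcongr

theorem summable_Kterm (hυ : 0 ≤ υ) (hap : 0 ≤ a * p) : Summable (Kterm υ a p μ y) :=
  (summable_pow_div_factorial _).of_nonneg_of_le (Kterm_nonneg hυ) (Kterm_le_pow_div_factorial_of_le hυ hap le_rfl)

end Kterm

section K

variable {υ a p μ : ℝ}

theorem one_le_K (hυ : 0 ≤ υ) (hap : 0 ≤ a * p) (y : ℝ) : 1 ≤ K υ a y p μ := by
  rw [K_eq_tsum_Kterm]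
  calc 1 = Kterm υ a p μ y 0 := by simp [Kterm]
    _ ≤ ∑' n, Kterm υ a p μ y n := (summable_Kterm hυ hap).le_tsum 0 fun n _ => Kterm_nonneg hυ n

theorem K_le_exp (hυ : 0 ≤ υ) (hap : 0 < a * p) (y : ℝ) :
    K υ a y p μ ≤ exp ((y + μ) ^ 2 / (2 * (a * p)) + υ) := by
  have hexp : ∑' n : ℕ, υ ^ n / (Nat.factorial n : ℝ) = exp υ := by
    rw [exp_eq_exp_ℝ, NormedSpace.exp_eq_tsum_div]
  rw [K_eq_tsum_Kterm]
  calc ∑' n, Kterm υ a p μ y n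
      ≤ ∑' n : ℕ, exp ((y + μ) ^ 2 / (2 * (a * p))) * (υ ^ n / (Nat.factorial n : ℝ)) :=
        (summable_Kterm hυ hap.le).tsum_le_tsum (fun n => Kterm_le_exp_sq hυ hap n)
          ((summable_pow_div_factorial υ).mul_left _)
    _ = exp ((y + μ) ^ 2 / (2 * (a * p)) + υ) := by rw [tsum_mul_left, hexp, exp_add]

theorem continuous_K (hυ : 0 ≤ υ) (hap : 0 ≤ a * p) : Continuous (fun y => K υ a y p μ) := by
  simp only [K_eq_tsum_Kterm]
  refine continuous_iff_continuousAt.mpr fun y₀ => ?_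
  have hcont : ContinuousOn (fun y => ∑' n, Kterm υ a p μ y n) (Set.Iio (y₀ + 1)) := by
    refine continuousOn_tsum (fun n => by unfold Kterm; fun_prop)
      (summable_pow_div_factorial (υ * exp (y₀ + 1 + μ))) fun n y hy => ?_
    rw [norm_of_nonneg (Kterm_nonneg hυ n)]
    exact Kterm_le_pow_div_factorial_of_le hυ hap (le_of_lt hy) n
  exact hcont.continuousAt (Iio_mem_nhds (lt_add_one y₀))

theorem continuous_E (hυ : 0 ≤ υ) (hap : 0 ≤ a * p) : Continuous (fun y => E υ a y p μ) :=
  (continuous_neg.comp (continuous_pow 2)).div_const _ |>.add <|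
    (continuous_K hυ hap).log fun y => (zero_lt_one.trans_le (one_le_K hυ hap y)).ne'

theorem E_le_quadratic (hυ : 0 ≤ υ) (hap : 0 < a * p) (y : ℝ) :
    E υ a y p μ ≤ -(y ^ 2) / (2 * p) + ((y + μ) ^ 2 / (2 * (a * p)) + υ) := by
  unfold E
  gcongr
  calc log (K υ a y p μ) ≤ log (exp ((y + μ) ^ 2 / (2 * (a * p)) + υ)) :=
        log_le_log (zero_lt_one.trans_le (one_le_K hυ hap.le y)) (K_le_exp hυ hap y)
    _ = (y + μ) ^ 2 / (2 * (a * p)) + υ := log_exp _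

end K

theorem tendsto_quadratic_cocompact_atBot {A B C : ℝ} (hA : A < 0) :
    Tendsto (fun y : ℝ => A * y ^ 2 + B * y + C) (cocompact ℝ) atBot := by
  have hsq : Tendsto (fun y : ℝ => y ^ 2) (cocompact ℝ) atTop := by
    simpa only [Function.comp_def, norm_eq_abs, sq_abs] using
      (tendsto_pow_atTop two_ne_zero).comp (tendsto_norm_cocompact_atTop (E := ℝ))
  have hlim : Tendsto (fun y : ℝ => A / 2 * y ^ 2 + (C - B ^ 2 / (2 * A))) (cocompact ℝ) atBot :=
    tendsto_atBot_add_const_right _ _ (hsq.const_mul_atTop_of_neg (by linarith))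
  refine tendsto_atBot_mono (fun y => ?_) hlim
  have hgap : 0 ≤ -(A / 2) * (y + B / A) ^ 2 := by
    nlinarith [sq_nonneg (y + B / A)]
  calc A * y ^ 2 + B * y + C
      = A / 2 * y ^ 2 + (C - B ^ 2 / (2 * A)) - -(A / 2) * (y + B / A) ^ 2 := by
        field_simp [hA.ne]; ring
    _ ≤ A / 2 * y ^ 2 + (C - B ^ 2 / (2 * A)) := sub_le_self _ hgap

theorem stmt_8 (υ a : ℝ) (hυ : 0 < υ) (ha : 1 < a) (p μ : ℝ) (hp : 0 < p) :
    Filter.Tendsto (fun y : ℝ => E υ a y p μ) (Filter.cocompact ℝ) Filter.atBot ∧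
    ∃ ybar : ℝ, ∀ y : ℝ, E υ a y p μ ≤ E υ a ybar p μ := by
  have hap : 0 < a * p := by positivity
  have hlead : (1 / a - 1) / (2 * p) < 0 :=
    div_neg_of_neg_of_pos (sub_neg.mpr ((div_lt_one (by linarith)).mpr ha)) (by positivity)
  have hquad : ∀ y, -(y ^ 2) / (2 * p) + ((y + μ) ^ 2 / (2 * (a * p)) + υ) =
      (1 / a - 1) / (2 * p) * y ^ 2 + μ / (a * p) * y + (μ ^ 2 / (2 * (a * p)) + υ) := by
    intro y; field_simp; ring
  have htend : Tendsto (fun y => E υ a y p μ) (cocompact ℝ) atBot :=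
    tendsto_atBot_mono (fun y => (E_le_quadratic hυ.le hap y).trans_eq (hquad y))
      (tendsto_quadratic_cocompact_atBot hlead)
  exact ⟨htend, (continuous_E hυ.le hap.le).exists_forall_ge htend⟩
end
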